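/- In oriented Bernoulli percolation on L at parameter p, for any Δ > δ > 1 there exists C > 0 such that for all m, n ≥ 1: max{V_p(Δm, n), H_p(m, Δn)} ≤ 1 − (1 − max{V_p(δm, n), H_p(m, δn)})^C. -/

import Mathlib

open MeasureTheory

namespace OrientedPerc

/-- Vertices of the plane; the lattice `L` consists of those with even coordinate sum. -/
abbrev Vtx := ℤ × ℤ

/-- An oriented edge is given by its base vertex and a direction:
`true` for the edge to `x + (1,1)`, `false` for the edge to `x + (-1,1)`. -/
abbrev Edge := Vtx × Bool

/-- A percolation configuration: each oriented edge is open (`true`) or closed. -/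
abbrev Config := Edge → Bool

/-- The endpoint of an oriented edge. -/
def tip (e : Edge) : Vtx := e.1 + (if e.2 then (1, 1) else (-1, 1))

/-- One open oriented step from `x` to `y`. -/
def Step (ω : Config) (x y : Vtx) : Prop :=
  ∃ b : Bool, ω (x, b) = true ∧ y = tip (x, b)

/-- `x → y`: there is an open oriented path from `x` to `y`. -/
def Conn (ω : Config) (x y : Vtx) : Prop := Relation.ReflTransGen (Step ω) x y

/-- `x → y` using only vertices in the set `S`. -/
def ConnIn (S : Set Vtx) (ω : Config) (x y : Vtx) : Prop :=
  x ∈ S ∧ Relation.ReflTransGen (fun a b => Step ω a b ∧ b ∈ S) x y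

/-- The box `[a,b] × [c,d]` intersected with the lattice `L`. -/
def box (a b c d : ℤ) : Set Vtx :=
  {v | a ≤ v.1 ∧ v.1 ≤ b ∧ c ≤ v.2 ∧ v.2 ≤ d ∧ Even (v.1 + v.2)}

/-- The box `[a,b] × [c,d]` is crossed vertically (bottom to top). -/
def CrossedVert (ω : Config) (a b c d : ℤ) : Prop :=
  ∃ x y : Vtx, x.2 = c ∧ y.2 = d ∧ ConnIn (box a b c d) ω x y

/-- The box `[a,b] × [c,d]` is crossed from left to right. -/
def CrossedLR (ω : Config) (a b c d : ℤ) : Prop :=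
  ∃ x y : Vtx, x.1 = a ∧ y.1 = b ∧ ConnIn (box a b c d) ω x y

/-- `μ` is Bernoulli oriented bond percolation with parameter `p`:
the states of edges are i.i.d., each open with probability `p`. -/
def IsBernoulli (μ : Measure Config) (p : ℝ) : Prop :=
  IsProbabilityMeasure μ ∧ p ∈ Set.Icc (0 : ℝ) 1 ∧
    ∀ (s : Finset Edge) (f : Edge → Bool),
      (μ {ω | ∀ e ∈ s, ω e = f e}).toReal = ∏ e ∈ s, (if f e then p else 1 - p)

/-- Probability of a vertical crossing of `[0,m] × [0,n]`. -/
noncomputable def V (μ : Measure Config) (m n : ℕ) : ℝ :=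
  (μ {ω | CrossedVert ω 0 (m : ℤ) 0 (n : ℤ)}).toReal

/-- Probability of a left-right crossing of `[0,m] × [0,n]`. -/
noncomputable def H (μ : Measure Config) (m n : ℕ) : ℝ :=
  (μ {ω | CrossedLR ω 0 (m : ℤ) 0 (n : ℤ)}).toReal

/-- The event `R_n ≥ t`: some `(y,0)` with `y ≤ 0` even is connected to some
`(x,n)` with `x ≥ t`. -/
def Rge (ω : Config) (n t : ℤ) : Prop :=
  ∃ x y : ℤ, Even y ∧ y ≤ 0 ∧ t ≤ x ∧ Conn ω (y, 0) (x, n)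

/-- The event `0 → ℓ_n`. -/
def ConnToLine (ω : Config) (n : ℤ) : Prop := ∃ x : ℤ, Conn ω (0, 0) (x, n)

/-!
A crossing of the long box either stays inside one of boundedly many regularly spaced translates
of the shorter box, or its horizontal (resp. vertical) extent is so large that it crosses a
window of width `m` (resp. height `n`) placed at one of these positions, in one direction or the
other. By translation and reflection invariance each of these events has probability at most
`x = max {V(δm, n), H(m, δn)}`, and they are increasing, so the Harris inequality for their
complements bounds the probability of the long crossing by `1 - (1 - x)^C`.
-/

open Finset

section Bernoulli

variable {μ ν : Measure Config} {p : ℝ} {s : Finset Edge}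

def bernoulliWeight (p : ℝ) (a : s → Bool) : ℝ := ∏ e, if a e then p else 1 - p

lemma bernoulliWeight_nonneg (hp : p ∈ Set.Icc 0 1) (a : s → Bool) : 0 ≤ bernoulliWeight p a :=
  prod_nonneg fun e _ => by split <;> linarith [hp.1, hp.2]

lemma bernoulliWeight_mul_bernoulliWeight (a b : s → Bool) :
    bernoulliWeight p a * bernoulliWeight p b
      = bernoulliWeight p (a ⊓ b) * bernoulliWeight p (a ⊔ b) := by
  simp only [bernoulliWeight, ← prod_mul_distrib]
  refine prod_congr rfl fun e _ => ?_
  cases ha : a e <;> cases hb : b e <;> simp [ha, hb, mul_comm]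

def closedOutside (s : Finset Edge) (a : s → Bool) : Config :=
  fun e => if h : e ∈ s then a ⟨e, h⟩ else false

lemma monotone_closedOutside : Monotone (closedOutside s) := fun a b hab e => by
  unfold closedOutside
  split
  · exact hab _
  · exact le_rfl

lemma cylinder_preimage_closedOutside {A : Set Config} (hA : DependsOn (· ∈ A) s) :
    cylinder s (closedOutside s ⁻¹' A) = A := by
  ext ω
  exact (hA fun e he => by simp [closedOutside, mem_coe.1 he]).to_iff

lemma measurableSet_of_dependsOn {A : Set Config} (hA : DependsOn (· ∈ A) s) :
    MeasurableSet A := by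
  rw [← cylinder_preimage_closedOutside hA]
  exact MeasurableSet.cylinder s (Set.toFinite _).measurableSet

lemma IsBernoulli.measureReal_cylinder_singleton (hB : IsBernoulli μ p) (a : s → Bool) :
    μ.real (cylinder s ({a} : Set (s → Bool))) = bernoulliWeight p a := by
  have hset : {ω : Config | ∀ e ∈ s, ω e = closedOutside s a e}
      = cylinder s ({a} : Set (s → Bool)) := by
    ext ω
    simp only [Set.mem_ofPred_eq, mem_cylinder, Set.mem_singleton_iff, funext_iff, Subtype.forall]
    exact forall₂_congr fun e he => by simp [closedOutside, he]
  rw [measureReal_def, ← hset, hB.2.2, bernoulliWeight, ← prod_coe_sort s]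
  simp [closedOutside]

lemma IsBernoulli.measureReal_cylinder (hB : IsBernoulli μ p) (S : Set (s → Bool)) :
    μ.real (cylinder s S) = ∑ a, S.indicator (bernoulliWeight p) a := by
  classical
  have := hB.1
  have hS : S = ((univ.filter (· ∈ S) : Finset (s → Bool)) : Set (s → Bool)) := by simp
  nth_rw 1 [hS]
  rw [measureReal_def, cylinder, ← sum_measure_preimage_singleton _
    fun a _ => (measurable_restrict s) (measurableSet_singleton a),
    ENNReal.toReal_sum fun a _ => measure_ne_top _ _, sum_filter]
  refine sum_congr rfl fun a _ => ?_
  rw [Set.indicator_apply, ← hB.measureReal_cylinder_singleton a]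
  rfl

lemma IsBernoulli.sum_bernoulliWeight (hB : IsBernoulli μ p) :
    ∑ a : s → Bool, bernoulliWeight p a = 1 := by
  have := hB.1
  simpa using (hB.measureReal_cylinder (s := s) Set.univ).symm

lemma IsBernoulli.ext (hμ : IsBernoulli μ p) (hν : IsBernoulli ν p) : μ = ν := by
  have := hμ.1
  have := hν.1
  refine ext_of_generate_finite _ generateFrom_measurableCylinders.symm
    isPiSystem_measurableCylinders (fun A hA => ?_) (by simp)
  obtain ⟨s, S, -, rfl⟩ := (mem_measurableCylinders A).1 hA
  rw [← ofReal_measureReal, ← ofReal_measureReal, hμ.measureReal_cylinder,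
    hν.measureReal_cylinder]

lemma measurable_comp_equiv (σ : Edge ≃ Edge) : Measurable fun ω : Config => ω ∘ σ :=
  measurable_pi_lambda _ fun e => measurable_pi_apply (σ e)

lemma IsBernoulli.map_comp (hB : IsBernoulli μ p) (σ : Edge ≃ Edge) :
    IsBernoulli (μ.map fun ω => ω ∘ σ) p := by
  obtain ⟨hprob, hp, hcyl⟩ := hB
  refine ⟨Measure.isProbabilityMeasure_map (measurable_comp_equiv σ).aemeasurable, hp,
    fun s f => ?_⟩
  have hset : (fun ω : Config => ω ∘ σ) ⁻¹' {ω | ∀ e ∈ s, ω e = f e}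
      = {ω | ∀ e ∈ s.map σ.toEmbedding, ω e = (f ∘ σ.symm) e} := by
    ext ω
    simp only [Set.mem_preimage, Set.mem_ofPred_eq, forall_mem_map, Function.comp_apply,
      Equiv.coe_toEmbedding, Equiv.symm_apply_apply]
  have hmeas : MeasurableSet {ω : Config | ∀ e ∈ s, ω e = f e} := by
    simp only [Set.ofPred_forall]
    exact measurableSet_biInter s fun e _ => measurable_pi_apply e (measurableSet_singleton _)
  rw [Measure.map_apply (measurable_comp_equiv σ) hmeas, hset, hcyl, prod_map]
  simp

lemma IsBernoulli.measureReal_preimage_comp (hB : IsBernoulli μ p) (σ : Edge ≃ Edge)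
    {A : Set Config} (hA : MeasurableSet A) :
    μ.real ((fun ω => ω ∘ σ) ⁻¹' A) = μ.real A := by
  rw [← map_measureReal_apply (measurable_comp_equiv σ) hA, (hB.map_comp σ).ext hB]

lemma _root_.IsLowerSet.antitone_indicator_one {α : Type*} [Preorder α] {S : Set α}
    (hS : IsLowerSet S) : Antitone (S.indicator (1 : α → ℝ)) := fun a b hab => by
  by_cases hb : b ∈ S
  · simp [hb, hS hab hb]
  · simp [hb, Set.indicator_nonneg]

/-- The Harris inequality, as the FKG inequality on the dual lattice: the Bernoulli weights are
log-modular. -/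
lemma IsBernoulli.measureReal_cylinder_mul_le (hB : IsBernoulli μ p) {S T : Set (s → Bool)}
    (hS : IsLowerSet S) (hT : IsLowerSet T) :
    μ.real (cylinder s S) * μ.real (cylinder s T) ≤ μ.real (cylinder s (S ∩ T)) := by
  have key := fkg (α := (s → Bool)ᵒᵈ) (μ := fun a => bernoulliWeight p (OrderDual.ofDual a))
    (f := fun a => S.indicator 1 (OrderDual.ofDual a))
    (g := fun a => T.indicator 1 (OrderDual.ofDual a))
    (fun a => bernoulliWeight_nonneg hB.2.1 _) (fun a => Set.indicator_nonneg (by simp) _)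
    (fun a => Set.indicator_nonneg (by simp) _) hS.antitone_indicator_one.dual_left
    hT.antitone_indicator_one.dual_left
    (fun a b => (bernoulliWeight_mul_bernoulliWeight _ _).trans_le (by rw [mul_comm]; rfl))
  have hdual : ∀ F : (s → Bool) → ℝ, ∑ a : (s → Bool)ᵒᵈ, F (OrderDual.ofDual a) = ∑ a, F a :=
    fun F => rfl
  have hinter : ∀ a,
      S.indicator (1 : (s → Bool) → ℝ) a * T.indicator 1 a = (S ∩ T).indicator 1 a :=
    fun a => by rw [Set.inter_indicator_one]; rfl
  have hweight : ∀ (U : Set (s → Bool)) a,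
      bernoulliWeight p a * U.indicator 1 a = U.indicator (bernoulliWeight p) a :=
    fun U a => by by_cases h : a ∈ U <;> simp [h]
  simp only [hdual, hinter, hB.sum_bernoulliWeight, one_mul, hweight] at key
  simpa only [hB.measureReal_cylinder] using key

lemma dependsOn_mem_sUnion {𝒜 : Set (Set Config)} (h : ∀ A ∈ 𝒜, DependsOn (· ∈ A) s) :
    DependsOn (· ∈ ⋃₀ 𝒜) s := fun _ _ hωω' => by
  simp only [Set.mem_sUnion]
  exact propext (exists_congr fun A => and_congr_right fun hA => (h A hA hωω').to_iff)

lemma IsBernoulli.measureReal_compl_mul_le (hB : IsBernoulli μ p) {A A' : Set Config}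
    (hA : IsUpperSet A) (hA' : IsUpperSet A') (hAs : DependsOn (· ∈ A) s)
    (hA's : DependsOn (· ∈ A') s) :
    μ.real Aᶜ * μ.real A'ᶜ ≤ μ.real (A ∪ A')ᶜ := by
  rw [← cylinder_preimage_closedOutside hAs, ← cylinder_preimage_closedOutside hA's,
    union_cylinder_same, compl_cylinder, compl_cylinder, compl_cylinder, Set.compl_union]
  exact hB.measureReal_cylinder_mul_le (hA.preimage monotone_closedOutside).compl
    (hA'.preimage monotone_closedOutside).compl

lemma IsBernoulli.prod_measureReal_compl_le (hB : IsBernoulli μ p) (𝒜 : Finset (Set Config))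
    (hup : ∀ A ∈ 𝒜, IsUpperSet A) (hdep : ∀ A ∈ 𝒜, DependsOn (· ∈ A) s) :
    ∏ A ∈ 𝒜, μ.real Aᶜ ≤ μ.real (⋃₀ (𝒜 : Set (Set Config)))ᶜ := by
  have := hB.1
  induction 𝒜 using Finset.induction_on with
  | empty => simp
  | insert A 𝒜 hA ih =>
    simp only [forall_mem_insert] at hup hdep
    rw [prod_insert hA, coe_insert, Set.sUnion_insert]
    calc μ.real Aᶜ * ∏ B ∈ 𝒜, μ.real Bᶜ ≤ μ.real Aᶜ * μ.real (⋃₀ (𝒜 : Set (Set Config)))ᶜ :=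
          mul_le_mul_of_nonneg_left (ih hup.2 hdep.2) measureReal_nonneg
      _ ≤ _ := hB.measureReal_compl_mul_le hup.1 (isUpperSet_sUnion hup.2) hdep.1
          (dependsOn_mem_sUnion hdep.2)

theorem IsBernoulli.measureReal_le_one_sub_pow (hB : IsBernoulli μ p) {E : Set Config}
    {𝒜 : Finset (Set Config)} {x : ℝ} {C : ℕ} (hup : ∀ A ∈ 𝒜, IsUpperSet A)
    (hloc : ∀ A ∈ 𝒜, ∃ s : Finset Edge, DependsOn (· ∈ A) ↑s) (hx : ∀ A ∈ 𝒜, μ.real A ≤ x)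
    (hx0 : 0 ≤ x) (hx1 : x ≤ 1) (hC : #𝒜 ≤ C) (hE : E ⊆ ⋃₀ ↑𝒜) :
    μ.real E ≤ 1 - (1 - x) ^ C := by
  have := hB.1
  choose! t ht using hloc
  have hdep : ∀ A ∈ 𝒜, DependsOn (· ∈ A) ↑(𝒜.biUnion t) := fun A hA =>
    (ht A hA).mono (coe_subset.2 (subset_biUnion_of_mem t hA))
  have hcompl : ∀ A ∈ 𝒜, 1 - x ≤ μ.real Aᶜ := fun A hA => by
    rw [probReal_compl_eq_one_sub (measurableSet_of_dependsOn (hdep A hA))]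
    linarith [hx A hA]
  calc μ.real E ≤ μ.real (⋃₀ (𝒜 : Set (Set Config))) := measureReal_mono hE
    _ = 1 - μ.real (⋃₀ (𝒜 : Set (Set Config)))ᶜ := by
        rw [probReal_compl_eq_one_sub (measurableSet_of_dependsOn (dependsOn_mem_sUnion hdep)),
          sub_sub_cancel]
    _ ≤ 1 - ∏ A ∈ 𝒜, μ.real Aᶜ := by linarith [hB.prod_measureReal_compl_le 𝒜 hup hdep]
    _ ≤ 1 - (1 - x) ^ #𝒜 := by
        rw [← prod_const]
        linarith [prod_le_prod (fun _ _ => sub_nonneg.2 hx1) hcompl]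
    _ ≤ 1 - (1 - x) ^ C := by
        linarith [pow_le_pow_of_le_one (sub_nonneg.2 hx1) (by linarith) hC]

theorem IsBernoulli.measureReal_le_one_sub_pow_of_cover (hB : IsBernoulli μ p) {E : Set Config}
    {𝒜 : ℕ → Finset (Set Config)} {x : ℝ} {r N C : ℕ} (hr : ∀ k, #(𝒜 k) ≤ r)
    (hup : ∀ k, ∀ A ∈ 𝒜 k, IsUpperSet A)
    (hloc : ∀ k, ∀ A ∈ 𝒜 k, ∃ s : Finset Edge, DependsOn (· ∈ A) ↑s)
    (hx : ∀ k, ∀ A ∈ 𝒜 k, μ.real A ≤ x) (hx0 : 0 ≤ x) (hx1 : x ≤ 1) (hC : r * N ≤ C)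
    (hE : ∀ ω ∈ E, ∃ k < N, ∃ A ∈ 𝒜 k, ω ∈ A) :
    μ.real E ≤ 1 - (1 - x) ^ C := by
  classical
  simp only [← mem_range] at hE
  refine hB.measureReal_le_one_sub_pow (𝒜 := (range N).biUnion 𝒜) ?_ ?_ ?_ hx0 hx1 ?_
    fun ω hω => ?_
  · simpa using fun A k _ => hup k A
  · simpa using fun A k _ => hloc k A
  · simpa using fun A k _ => hx k A
  · exact (card_biUnion_le_card_mul _ _ r fun k _ => hr k).trans (by simpa [mul_comm])
  · obtain ⟨k, hk, A, hA, hωA⟩ := hE ω hω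
    exact Set.mem_sUnion_of_mem hωA (mem_biUnion.2 ⟨k, hk, hA⟩)

end Bernoulli

section Crossing

variable {S S' : Set Vtx} {P P' Q Q' : Vtx → Prop} {ω ω' : Config} {x y : Vtx}

def Crossing (S : Set Vtx) (P Q : Vtx → Prop) : Set Config :=
  {ω | ∃ x y, P x ∧ Q y ∧ ConnIn S ω x y}

abbrev vertCrossing (a b c d : ℤ) : Set Config := Crossing (box a b c d) (·.2 = c) (·.2 = d)

abbrev lrCrossing (a b c d : ℤ) : Set Config := Crossing (box a b c d) (·.1 = a) (·.1 = b)

abbrev rlCrossing (a b c d : ℤ) : Set Config := Crossing (box a b c d) (·.1 = b) (·.1 = a)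

lemma ConnIn.mem_right (h : ConnIn S ω x y) : y ∈ S := by
  obtain ⟨hx, h⟩ := h
  induction h with
  | refl => exact hx
  | tail _ hbc _ => exact hbc.2

lemma ConnIn.mono (hS : S ⊆ S') (hω : ω ≤ ω') (h : ConnIn S ω x y) : ConnIn S' ω' x y :=
  ⟨hS h.1, Relation.ReflTransGen.mono (fun _ _ ⟨⟨d, hd, hy⟩, hb⟩ =>
    ⟨⟨d, Bool.le_iff_imp.1 (hω _) hd, hy⟩, hS hb⟩) _ _ h.2⟩

lemma ConnIn.congr_config (hωω' : ∀ v ∈ S, ∀ d, ω (v, d) = ω' (v, d)) (h : ConnIn S ω x y) :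
    ConnIn S ω' x y := by
  obtain ⟨hx, h⟩ := h
  induction h with
  | refl => exact ⟨hx, .refl⟩
  | tail _ hbc ih =>
    obtain ⟨⟨d, hd, rfl⟩, hS⟩ := hbc
    exact ⟨hx, ih.2.tail ⟨⟨d, hωω' _ ih.mem_right d ▸ hd, rfl⟩, hS⟩⟩

lemma crossing_mono (hS : S ⊆ S') (hP : ∀ v, P v → P' v) (hQ : ∀ v, Q v → Q' v) :
    Crossing S P Q ⊆ Crossing S' P' Q' := fun _ ⟨x, y, hx, hy, h⟩ =>
  ⟨x, y, hP x hx, hQ y hy, h.mono hS le_rfl⟩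

lemma isUpperSet_crossing (S : Set Vtx) (P Q : Vtx → Prop) : IsUpperSet (Crossing S P Q) :=
  fun _ _ hω ⟨x, y, hx, hy, h⟩ => ⟨x, y, hx, hy, h.mono subset_rfl hω⟩

lemma dependsOn_crossing {s : Finset Edge} (hs : ∀ v ∈ S, ∀ d, (v, d) ∈ s) :
    DependsOn (· ∈ Crossing S P Q) ↑s := fun _ _ hωω' => propext
  ⟨fun ⟨x, y, hx, hy, h⟩ => ⟨x, y, hx, hy, h.congr_config fun v hv d => hωω' _ (hs v hv d)⟩,
    fun ⟨x, y, hx, hy, h⟩ => ⟨x, y, hx, hy,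
      h.congr_config fun v hv d => (hωω' _ (hs v hv d)).symm⟩⟩

lemma exists_dependsOn_crossing_box (a b c d : ℤ) (P Q : Vtx → Prop) :
    ∃ s : Finset Edge, DependsOn (· ∈ Crossing (box a b c d) P Q) ↑s :=
  ⟨(Icc a b ×ˢ Icc c d) ×ˢ univ, dependsOn_crossing fun v hv _ => by
    obtain ⟨h₁, h₂, h₃, h₄, -⟩ := hv
    simp [h₁, h₂, h₃, h₄]⟩

lemma _root_.Relation.reflTransGen_iff_of_equiv {α β : Type*} {r : α → α → Prop}
    {r' : β → β → Prop} (φ : α ≃ β) (h : ∀ a b, r a b ↔ r' (φ a) (φ b)) {x y : α} :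
    Relation.ReflTransGen r x y ↔ Relation.ReflTransGen r' (φ x) (φ y) :=
  ⟨fun hxy => Relation.ReflTransGen.lift φ (fun a b => (h a b).1) x y hxy, fun hxy => by
    simpa [Function.onFun] using
      Relation.ReflTransGen.lift φ.symm (fun a b hab => (h _ _).2 (by simpa using hab)) _ _ hxy⟩

lemma step_comp_prodCongr_iff (φ : Vtx ≃ Vtx) (τ : Bool ≃ Bool)
    (hφ : ∀ e : Edge, tip (φ e.1, τ e.2) = φ (tip e)) (ω : Config) (x y : Vtx) :
    Step (ω ∘ φ.prodCongr τ) x y ↔ Step ω (φ x) (φ y) := by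
  constructor
  · rintro ⟨d, hd, rfl⟩
    exact ⟨τ d, hd, (hφ (x, d)).symm⟩
  · rintro ⟨d, hd, hy⟩
    refine ⟨τ.symm d, by simpa using hd, φ.injective ?_⟩
    rw [hy, ← hφ]
    simp

lemma preimage_comp_prodCongr_crossing (φ : Vtx ≃ Vtx) (τ : Bool ≃ Bool)
    (hφ : ∀ e : Edge, tip (φ e.1, τ e.2) = φ (tip e)) (S : Set Vtx) (P Q : Vtx → Prop) :
    (fun ω : Config => ω ∘ φ.prodCongr τ) ⁻¹' Crossing S P Q
      = Crossing (φ.symm ⁻¹' S) (P ∘ φ.symm) (Q ∘ φ.symm) := by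
  ext ω
  have hconn : ∀ x y, ConnIn S (ω ∘ φ.prodCongr τ) x y
      ↔ ConnIn (φ.symm ⁻¹' S) ω (φ x) (φ y) := fun x y =>
    and_congr (by simp) (Relation.reflTransGen_iff_of_equiv φ fun a b =>
      and_congr (step_comp_prodCongr_iff φ τ hφ ω a b) (by simp))
  simp only [Set.mem_preimage, Crossing, Set.mem_ofPred_eq, hconn, Function.comp_apply]
  constructor
  · rintro ⟨x, y, hx, hy, h⟩
    exact ⟨φ x, φ y, by simpa using hx, by simpa using hy, h⟩
  · rintro ⟨x, y, hx, hy, h⟩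
    exact ⟨φ.symm x, φ.symm y, hx, hy, by simpa using h⟩

end Crossing

section Invariance

variable {μ : Measure Config} {p : ℝ}

lemma IsBernoulli.measureReal_crossing_comp (hB : IsBernoulli μ p) (φ : Vtx ≃ Vtx)
    (τ : Bool ≃ Bool) (hφ : ∀ e : Edge, tip (φ e.1, τ e.2) = φ (tip e)) {S : Set Vtx}
    {P Q : Vtx → Prop} (hloc : ∃ s : Finset Edge, DependsOn (· ∈ Crossing S P Q) ↑s) :
    μ.real (Crossing (φ.symm ⁻¹' S) (P ∘ φ.symm) (Q ∘ φ.symm)) = μ.real (Crossing S P Q) := by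
  obtain ⟨s, hs⟩ := hloc
  rw [← preimage_comp_prodCongr_crossing φ τ hφ,
    hB.measureReal_preimage_comp _ (measurableSet_of_dependsOn hs)]

lemma IsBernoulli.measureReal_crossing_box_translate (hB : IsBernoulli μ p) {t u : ℤ}
    (htu : Even (t + u)) (a b c d : ℤ) (P Q : Vtx → Prop) :
    μ.real (Crossing (box (a + t) (b + t) (c + u) (d + u)) (fun v => P (v - (t, u)))
      (fun v => Q (v - (t, u)))) = μ.real (Crossing (box a b c d) P Q) := by
  have hbox : (Equiv.addRight ((t, u) : Vtx)).symm ⁻¹' box a b c d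
      = box (a + t) (b + t) (c + u) (d + u) := by
    ext v
    simp only [box, Int.even_iff, Set.mem_preimage, Set.mem_ofPred_eq, Equiv.addRight_symm,
      Equiv.coe_addRight, Prod.fst_add, Prod.snd_add, Prod.fst_neg, Prod.snd_neg] at htu ⊢
    omega
  rw [← hB.measureReal_crossing_comp (Equiv.addRight ((t, u) : Vtx)) (Equiv.refl Bool)
    (fun e => add_right_comm _ _ _) (exists_dependsOn_crossing_box a b c d P Q), hbox]
  rfl

lemma IsBernoulli.measureReal_crossing_box_reflect (hB : IsBernoulli μ p) (a b c d : ℤ)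
    (P Q : Vtx → Prop) :
    μ.real (Crossing (box (-b) (-a) c d) (fun v => P (-v.1, v.2)) (fun v => Q (-v.1, v.2)))
      = μ.real (Crossing (box a b c d) P Q) := by
  have hbox : ((Equiv.neg ℤ).prodCongr (Equiv.refl ℤ)).symm ⁻¹' box a b c d
      = box (-b) (-a) c d := by
    ext v
    simp only [box, Int.even_iff, Set.mem_preimage, Set.mem_ofPred_eq, Equiv.prodCongr_symm,
      Equiv.prodCongr_apply, Equiv.neg_symm, Equiv.neg_apply, Equiv.refl_symm, Equiv.coe_refl,
      Prod.map_fst, Prod.map_snd, id_eq]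
    omega
  rw [← hB.measureReal_crossing_comp ((Equiv.neg ℤ).prodCongr (Equiv.refl ℤ)) Equiv.boolNot
    (by rintro ⟨⟨x₁, x₂⟩, _ | _⟩ <;> simp [tip, Equiv.boolNot] <;> ring)
    (exists_dependsOn_crossing_box a b c d P Q), hbox]
  rfl

lemma IsBernoulli.measureReal_vertCrossing (hB : IsBernoulli μ p) {t u : ℤ} (htu : Even (t + u))
    (w n : ℕ) : μ.real (vertCrossing t (t + w) u (u + n)) = V μ w n := by
  refine Eq.trans (congrArg μ.real ?_)
    (hB.measureReal_crossing_box_translate htu 0 w 0 n (·.2 = 0) (·.2 = n))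
  simp only [zero_add, add_comm t, add_comm u, Prod.snd_sub, sub_eq_iff_eq_add]

lemma IsBernoulli.measureReal_lrCrossing (hB : IsBernoulli μ p) {t u : ℤ} (htu : Even (t + u))
    (m h : ℕ) : μ.real (lrCrossing t (t + m) u (u + h)) = H μ m h := by
  refine Eq.trans (congrArg μ.real ?_)
    (hB.measureReal_crossing_box_translate htu 0 m 0 h (·.1 = 0) (·.1 = m))
  simp only [zero_add, add_comm t, add_comm u, Prod.fst_sub, sub_eq_iff_eq_add]

lemma IsBernoulli.measureReal_rlCrossing (hB : IsBernoulli μ p) {t u : ℤ} (m h : ℕ)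
    (htu : Even (t + m + u)) : μ.real (rlCrossing t (t + m) u (u + h)) = H μ m h := by
  have htu' : Even (-(t + m) + u) := by rw [Int.even_iff] at htu ⊢; omega
  rw [← hB.measureReal_lrCrossing htu' m h, ← hB.measureReal_crossing_box_reflect]
  congr 2
  · congr 1; ring
  all_goals funext v; apply propext; omega

end Invariance

section Walks

variable {S : Set Vtx} {ω : Config} {x y : Vtx}

lemma Step.snd_eq (h : Step ω x y) : y.2 = x.2 + 1 := by
  obtain ⟨d, -, rfl⟩ := h
  cases d <;> simp [tip]

lemma Step.abs_fst_sub_le (h : Step ω x y) : |y.1 - x.1| ≤ 1 := by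
  obtain ⟨d, -, rfl⟩ := h
  cases d <;> simp [tip]

lemma Step.abs_snd_sub_le (h : Step ω x y) : |y.2 - x.2| ≤ 1 := by
  simp [h.snd_eq]

lemma ConnIn.snd_le (h : ConnIn S ω x y) : x.2 ≤ y.2 := by
  obtain ⟨-, h⟩ := h
  induction h with
  | refl => exact le_rfl
  | tail _ hbc ih => linarith [hbc.1.snd_eq]

lemma ConnIn.exists_walk (h : ConnIn S ω x y) :
    ∃ (L : ℕ) (f : ℕ → Vtx), f 0 = x ∧ f L = y ∧ (∀ i ≤ L, f i ∈ S) ∧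
      ∀ i < L, Step ω (f i) (f (i + 1)) := by
  obtain ⟨hx, h⟩ := h
  induction h with
  | refl => exact ⟨0, fun _ => x, rfl, rfl, fun _ _ => hx, fun _ h => absurd h (Nat.not_lt_zero _)⟩
  | @tail b c _ hbc ih =>
    obtain ⟨L, f, hf0, hfL, hfS, hstep⟩ := ih
    refine ⟨L + 1, fun i => if i ≤ L then f i else c, by simp [hf0], by simp, fun i hi => ?_,
      fun i hi => ?_⟩
    · by_cases hiL : i ≤ L
      · simpa [hiL] using hfS i hiL
      · simpa [hiL] using hbc.2
    · rcases Nat.lt_succ_iff_lt_or_eq.1 hi with hiL | rfl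
      · simpa [hiL.le, Nat.succ_le_of_lt hiL] using hstep i hiL
      · simpa [hfL] using hbc.1

lemma connIn_of_walk {f : ℕ → Vtx} {u v : ℕ} (huv : u ≤ v)
    (hS : ∀ i, u ≤ i → i ≤ v → f i ∈ S) (hstep : ∀ i, u ≤ i → i < v → Step ω (f i) (f (i + 1))) :
    ConnIn S ω (f u) (f v) := by
  induction v, huv using Nat.le_induction with
  | base => exact ⟨hS u le_rfl le_rfl, .refl⟩
  | succ v huv ih =>
    have h := ih (fun i hu hv => hS i hu (by omega)) (fun i hu hv => hstep i hu (by omega))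
    exact ⟨h.1, h.2.tail ⟨hstep v huv (by omega), hS (v + 1) (by omega) le_rfl⟩⟩

end Walks

section Corridor

variable {g : ℕ → ℤ} {A B : ℕ} {lo hi : ℤ}

lemma exists_last_eq_of_le (hAB : A ≤ B) (hg : ∀ i, A ≤ i → i < B → |g (i + 1) - g i| ≤ 1)
    (hA : g A ≤ lo) (hB : lo ≤ g B) :
    ∃ u, A ≤ u ∧ u ≤ B ∧ g u = lo ∧ ∀ i, u ≤ i → i ≤ B → lo ≤ g i := by
  induction B, hAB using Nat.le_induction with
  | base => exact ⟨A, le_rfl, le_rfl, by omega, fun i h₁ h₂ => by rwa [le_antisymm h₂ h₁]⟩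
  | succ B hAB ih =>
    by_cases hlo : g (B + 1) = lo
    · exact ⟨B + 1, by omega, le_rfl, hlo, fun i h₁ h₂ => by rw [le_antisymm h₂ h₁]; exact hB⟩
    have hstep := abs_le.1 (hg B hAB (by omega))
    obtain ⟨u, hAu, huB, hgu, hu⟩ := ih (fun i h₁ h₂ => hg i h₁ (by omega)) (by omega)
    refine ⟨u, hAu, by omega, hgu, fun i h₁ h₂ => ?_⟩
    rcases Nat.lt_succ_iff_lt_or_eq.1 (Nat.lt_succ_of_le h₂) with h | rfl
    · exact hu i h₁ (by omega)
    · exact hB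

/-- Stop at the first visit of `hi` and start at the last visit of `lo` before it. -/
theorem exists_corridor (hAB : A ≤ B) (hg : ∀ i, A ≤ i → i < B → |g (i + 1) - g i| ≤ 1)
    (hA : g A ≤ lo) (hlohi : lo ≤ hi) (hB : hi ≤ g B) :
    ∃ u v, A ≤ u ∧ u ≤ v ∧ v ≤ B ∧ g u = lo ∧ g v = hi ∧
      ∀ i, u ≤ i → i ≤ v → lo ≤ g i ∧ g i ≤ hi := by
  classical
  have hex : ∃ k, A + k ≤ B ∧ hi ≤ g (A + k) :=
    ⟨B - A, by omega, by rwa [Nat.add_sub_cancel' hAB]⟩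
  obtain ⟨hkB, hk⟩ := Nat.find_spec hex
  set v := A + Nat.find hex with hv
  have hbefore : ∀ i, A ≤ i → i < v → g i < hi := fun i h₁ h₂ => by
    have := Nat.find_min hex (m := i - A) (by omega)
    rw [Nat.add_sub_cancel' h₁] at this
    exact not_le.1 fun h => this ⟨by omega, h⟩
  have hgv : g v = hi := by
    rcases Nat.eq_zero_or_pos (Nat.find hex) with h0 | hpos
    · rw [hv, h0, add_zero] at hk ⊢
      omega
    · have h₁ := hbefore (v - 1) (by omega) (by omega)
      have h₂ := abs_le.1 (hg (v - 1) (by omega) (by omega))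
      rw [Nat.sub_add_cancel (by omega)] at h₂
      omega
  obtain ⟨u, hAu, huv, hgu, hu⟩ := exists_last_eq_of_le (B := v) (by omega)
    (fun i h₁ h₂ => hg i h₁ (by omega)) hA (by omega)
  refine ⟨u, v, hAu, huv, hkB, hgu, hgv, fun i h₁ h₂ => ⟨hu i h₁ h₂, ?_⟩⟩
  rcases Nat.lt_or_ge i v with h | h
  · exact (hbefore i (by omega) h).le
  · rw [le_antisymm h₂ h, hgv]

end Corridor

section Cover

variable {S : Set Vtx} {P Q : Vtx → Prop} {ω : Config}

lemma exists_nat_mul_le_lt {s : ℕ} (hs : 0 < s) {z : ℤ} (hz : 0 ≤ z) :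
    ∃ k : ℕ, (s : ℤ) * k ≤ z ∧ z < s * k + s := by
  have hs' : (0 : ℤ) < s := by exact_mod_cast hs
  refine ⟨(z / s).toNat, ?_⟩
  rw [Int.toNat_of_nonneg (Int.ediv_nonneg hz hs'.le)]
  have := Int.mul_ediv_add_emod z s
  have := Int.emod_nonneg z hs'.ne'
  have := Int.emod_lt_of_pos z hs'
  constructor <;> linarith

lemma exists_nat_le_mul_lt {s : ℕ} (hs : 0 < s) {z : ℤ} (hz : 0 ≤ z) :
    ∃ k : ℕ, z ≤ (s : ℤ) * k ∧ (s : ℤ) * k < z + s := by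
  obtain ⟨k, hk⟩ := exists_nat_mul_le_lt hs (z := z + s - 1) (by omega)
  exact ⟨k, by omega, by omega⟩

lemma mem_crossing_of_walk (π : Vtx → ℤ) (hπ : ∀ x y, Step ω x y → |π y - π x| ≤ 1)
    {f : ℕ → Vtx} {L : ℕ} (hfS : ∀ i ≤ L, f i ∈ S) (hstep : ∀ i < L, Step ω (f i) (f (i + 1)))
    {i j : ℕ} (hij : i ≤ j) (hjL : j ≤ L) {t t' : ℤ} (hi : π (f i) ≤ t) (htt' : t ≤ t')
    (hj : t' ≤ π (f j)) :
    ω ∈ Crossing {v ∈ S | t ≤ π v ∧ π v ≤ t'} (π · = t) (π · = t') := by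
  obtain ⟨u, v, hiu, huv, hvj, hu, hv, huv'⟩ := exists_corridor (g := π ∘ f) hij
    (fun k _ hk => hπ _ _ (hstep k (by omega))) hi htt' hj
  exact ⟨f u, f v, hu, hv, connIn_of_walk huv (fun k h₁ h₂ => ⟨hfS k (by omega), huv' k h₁ h₂⟩)
    fun k _ h₂ => hstep k (by omega)⟩

/-- If the `π`-range of the crossing path has length at most `w - s + 1`, the path fits in a
slab of width `w`; otherwise, as `w ≥ m + 2 s - 3`, it spans a slab of width `m` and crosses
it. -/
theorem crossing_cover (π : Vtx → ℤ) (hπ : ∀ x y, Step ω x y → |π y - π x| ≤ 1)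
    {W m w s N : ℕ} (hS : ∀ v ∈ S, 0 ≤ π v ∧ π v ≤ W) (hs : 0 < s) (hw : m + 2 * s ≤ w + 3)
    (hN : W < s * N) (h : ω ∈ Crossing S P Q) :
    ∃ k < N, ω ∈ Crossing {v ∈ S | s * k ≤ π v ∧ π v ≤ s * k + w} P Q ∨
      ω ∈ Crossing {v ∈ S | s * k ≤ π v ∧ π v ≤ s * k + m} (π · = s * k) (π · = s * k + m) ∨
      ω ∈ Crossing {v ∈ S | s * k ≤ π v ∧ π v ≤ s * k + m} (π · = s * k + m) (π · = s * k) := by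
  obtain ⟨x, y, hx, hy, hc⟩ := h
  obtain ⟨L, f, rfl, rfl, hfS, hstep⟩ := hc.exists_walk
  obtain ⟨imin, himin, hmin⟩ := (range (L + 1)).exists_min_image (π ∘ f) ⟨0, by simp⟩
  obtain ⟨imax, himax, hmax⟩ := (range (L + 1)).exists_max_image (π ∘ f) ⟨0, by simp⟩
  simp only [mem_range, Nat.lt_succ_iff, Function.comp_apply] at himin hmin himax hmax
  have hlo := (hS _ (hfS imin himin)).1
  have hhi := (hS _ (hfS imax himax)).2
  have hminmax := hmin imax himax
  have hkN : ∀ k : ℕ, (s : ℤ) * k ≤ W → k < N := fun k hk => by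
    have hN' : (W : ℤ) < s * N := by exact_mod_cast hN
    exact_mod_cast lt_of_mul_lt_mul_left (hk.trans_lt hN') (by positivity)
  by_cases hnarrow : π (f imax) - π (f imin) + s ≤ w + 1
  · obtain ⟨k, hk⟩ := exists_nat_mul_le_lt hs hlo
    refine ⟨k, hkN k (by omega), Or.inl ⟨f 0, f L, hx, hy, connIn_of_walk (Nat.zero_le L)
      (fun i _ hi => ⟨hfS i hi, by linarith [hmin i hi], by linarith [hmax i hi]⟩)
      fun i _ hi => hstep i hi⟩⟩
  obtain ⟨k, hk⟩ := exists_nat_le_mul_lt hs hlo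
  refine ⟨k, hkN k (by omega), Or.inr ?_⟩
  rcases le_total imin imax with hle | hle
  · exact Or.inl (mem_crossing_of_walk π hπ hfS hstep hle himax hk.1 (by omega) (by omega))
  · refine Or.inr (crossing_mono ?_ ?_ ?_ (mem_crossing_of_walk (fun v => -π v)
      (fun x y hxy => by simpa [abs_sub_comm, neg_add_eq_sub] using hπ x y hxy) hfS hstep hle
      himin (t := -(s * k + m)) (t' := -(s * k)) (by omega) (by omega) (by omega)))
    · exact fun v ⟨hvS, h₁, h₂⟩ => ⟨hvS, by omega, by omega⟩
    all_goals exact fun v hv => by omega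

end Cover

/-- The spacing `s` must be small compared with `(δ - 1) k`, so that slabs of width `⌈δ k⌉`
starting at multiples of `s` overlap enough, yet proportional to `k`, so that boundedly many of
them cover width `⌈Δ k⌉`; `s ≈ (δ - 1) k / 4` does both. -/
lemma exists_spacing {δ : ℝ} (hδ : 1 < δ) (Δ : ℝ) :
    ∃ N : ℕ, ∀ k : ℕ, 1 ≤ k → ∃ s : ℕ, 2 ≤ s ∧ Even s ∧ k + 2 * s ≤ ⌈δ * k⌉₊ + 3 ∧
      ⌈Δ * k⌉₊ < s * N := by
  set q := ⌈4 / (δ - 1)⌉₊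
  have hq : 4 ≤ (δ - 1) * q := by
    have := Nat.le_ceil (4 / (δ - 1))
    rwa [div_le_iff₀ (by linarith), mul_comm] at this
  have hq0 : 0 < q := by
    have : (0 : ℝ) < q := by nlinarith
    exact_mod_cast this
  refine ⟨q * (⌈Δ⌉₊ + 1), fun k hk => ?_⟩
  have hk₁ := Nat.div_mul_le_self k (2 * q)
  have hk₂ := Nat.lt_mul_div_succ k (Nat.mul_pos two_pos hq0)
  generalize k / (2 * q) = d at hk₁ hk₂
  refine ⟨2 * (d + 1), by omega, even_two_mul _, ?_, ?_⟩
  · have hd : ((d * (2 * q) : ℕ) : ℝ) ≤ k := by exact_mod_cast hk₁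
    have hk' : (1 : ℝ) ≤ k := by exact_mod_cast hk
    have : k + 4 * d < ⌈δ * k⌉₊ := by
      rw [Nat.lt_ceil]
      push_cast at hd ⊢
      nlinarith
    omega
  · have hΔ : ⌈Δ * k⌉₊ ≤ ⌈Δ⌉₊ * k := Nat.ceil_le.2 (by
      push_cast
      exact mul_le_mul_of_nonneg_right (Nat.le_ceil Δ) (Nat.cast_nonneg k))
    nlinarith

section Comparison

variable {μ : Measure Config} {p : ℝ}

lemma IsBernoulli.V_le_one_sub_pow (hB : IsBernoulli μ p) {m n w h W s N : ℕ} (hs : 0 < s)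
    (hse : Even s) (hw : m + 2 * s ≤ w + 3) (hnh : n < h) (hN : W < s * N) {x : ℝ}
    (hV : V μ w n ≤ x) (hH : H μ m h ≤ x) (hx1 : x ≤ 1) :
    V μ W n ≤ 1 - (1 - x) ^ (3 * N) := by
  have hsk : ∀ k : ℕ, Even ((s : ℤ) * k) := fun k => ((Int.even_coe_nat s).2 hse).mul_right k
  -- the offset `c` makes the reflected box a translate of `[0, m] × [0, h]` within `L`
  set c : ℤ := -((m : ℤ) % 2) with hc
  refine hB.measureReal_le_one_sub_pow_of_cover (E := vertCrossing 0 W 0 n)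
    (𝒜 := fun k => {vertCrossing (s * k) (s * k + w) 0 n, lrCrossing (s * k) (s * k + m) 0 h,
      rlCrossing (s * k) (s * k + m) c (c + h)})
    (fun _ => card_le_three) ?_ ?_ ?_ (measureReal_nonneg.trans hV) hx1 le_rfl fun ω hω => ?_
  · simp only [mem_insert, mem_singleton]
    rintro k A (rfl | rfl | rfl) <;> exact isUpperSet_crossing _ _ _
  · simp only [mem_insert, mem_singleton]
    rintro k A (rfl | rfl | rfl) <;> exact exists_dependsOn_crossing_box _ _ _ _ _ _
  · simp only [mem_insert, mem_singleton]
    rintro k A (rfl | rfl | rfl)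
    · simpa using (hB.measureReal_vertCrossing (u := 0) (by simpa using hsk k) w n).le.trans hV
    · simpa using (hB.measureReal_lrCrossing (u := 0) (by simpa using hsk k) m h).le.trans hH
    · refine (hB.measureReal_rlCrossing m h ?_).le.trans hH
      have := Int.even_iff.1 (hsk k)
      rw [Int.even_iff]
      omega
  obtain ⟨k, hk, hcross | hcross | hcross⟩ := crossing_cover (S := box 0 W 0 n) Prod.fst
    (fun _ _ hxy => hxy.abs_fst_sub_le) (fun v hv => ⟨hv.1, hv.2.1⟩) hs hw hN hω
  · refine ⟨k, hk, _, mem_insert_self _ _, crossing_mono ?_ (fun _ => id) (fun _ => id) hcross⟩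
    rintro v ⟨⟨-, -, h₃, h₄, h₅⟩, h₆, h₇⟩
    exact ⟨h₆, h₇, h₃, h₄, h₅⟩
  · refine ⟨k, hk, _, mem_insert_of_mem (mem_insert_self _ _),
      crossing_mono ?_ (fun _ => id) (fun _ => id) hcross⟩
    rintro v ⟨⟨-, -, h₃, h₄, h₅⟩, h₆, h₇⟩
    exact ⟨h₆, h₇, h₃, by omega, h₅⟩
  · refine ⟨k, hk, _, mem_insert_of_mem (mem_insert_of_mem (mem_singleton_self _)),
      crossing_mono ?_ (fun _ => id) (fun _ => id) hcross⟩
    rintro v ⟨⟨-, -, h₃, h₄, h₅⟩, h₆, h₇⟩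
    exact ⟨h₆, h₇, by omega, by omega, h₅⟩

lemma IsBernoulli.H_le_one_sub_pow (hB : IsBernoulli μ p) {m n w h W s N : ℕ} (hs : 0 < s)
    (hse : Even s) (hmw : m ≤ w) (hh : n + 2 * s ≤ h + 3) (hn : 0 < n) (hN : W < s * N)
    {x : ℝ} (hV : V μ w n ≤ x) (hH : H μ m h ≤ x) (hx1 : x ≤ 1) :
    H μ m W ≤ 1 - (1 - x) ^ (3 * N) := by
  have hsk : ∀ k : ℕ, Even ((s : ℤ) * k) := fun k => ((Int.even_coe_nat s).2 hse).mul_right k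
  refine hB.measureReal_le_one_sub_pow_of_cover (E := lrCrossing 0 m 0 W) (N := N)
    (𝒜 := fun k => {lrCrossing 0 m (s * k) (s * k + h), vertCrossing 0 w (s * k) (s * k + n)})
    (fun _ => card_le_two) ?_ ?_ ?_ (measureReal_nonneg.trans hV) hx1 (by omega) fun ω hω => ?_
  · simp only [mem_insert, mem_singleton]
    rintro k A (rfl | rfl) <;> exact isUpperSet_crossing _ _ _
  · simp only [mem_insert, mem_singleton]
    rintro k A (rfl | rfl) <;> exact exists_dependsOn_crossing_box _ _ _ _ _ _
  · simp only [mem_insert, mem_singleton]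
    rintro k A (rfl | rfl)
    · simpa using (hB.measureReal_lrCrossing (t := 0) (by simpa using hsk k) m h).le.trans hH
    · simpa using (hB.measureReal_vertCrossing (t := 0) (by simpa using hsk k) w n).le.trans hV
  obtain ⟨k, hk, hcross | hcross | ⟨x, y, hx, hy, hxy⟩⟩ := crossing_cover (S := box 0 m 0 W)
    Prod.snd (fun _ _ hxy => hxy.abs_snd_sub_le) (fun v hv => ⟨hv.2.2.1, hv.2.2.2.1⟩) hs hh hN hω
  · refine ⟨k, hk, _, mem_insert_self _ _, crossing_mono ?_ (fun _ => id) (fun _ => id) hcross⟩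
    rintro v ⟨⟨h₁, h₂, -, -, h₅⟩, h₆, h₇⟩
    exact ⟨h₁, h₂, h₆, h₇, h₅⟩
  · refine ⟨k, hk, _, mem_insert_of_mem (mem_singleton_self _),
      crossing_mono ?_ (fun _ => id) (fun _ => id) hcross⟩
    rintro v ⟨⟨h₁, h₂, -, -, h₅⟩, h₆, h₇⟩
    exact ⟨h₁, by omega, h₆, h₇, h₅⟩
  · have := hxy.snd_le
    omega

end Comparison

theorem aspect_ratio_comparison_general (μ : Measure Config) (p : ℝ) (hB : IsBernoulli μ p)
    (Δ δ : ℝ) (hδ : 1 < δ) :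
    ∃ C : ℕ, 0 < C ∧ ∀ m n : ℕ, 1 ≤ m → 1 ≤ n →
      max (V μ ⌈Δ * m⌉₊ n) (H μ m ⌈Δ * n⌉₊)
        ≤ 1 - (1 - max (V μ ⌈δ * m⌉₊ n) (H μ m ⌈δ * n⌉₊)) ^ C := by
  have := hB.1
  obtain ⟨N, hN⟩ := exists_spacing hδ Δ
  have hN0 : 0 < N := by
    obtain ⟨s, -, -, -, hs⟩ := hN 1 le_rfl
    exact Nat.pos_of_ne_zero fun h => by simp [h] at hs
  refine ⟨3 * N, by omega, fun m n hm hn => ?_⟩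
  obtain ⟨s, hs, hse, hw, hW⟩ := hN m hm
  obtain ⟨s', hs', hse', hh, hH⟩ := hN n hn
  have hx1 : max (V μ ⌈δ * m⌉₊ n) (H μ m ⌈δ * n⌉₊) ≤ 1 :=
    max_le measureReal_le_one measureReal_le_one
  exact max_le
    (hB.V_le_one_sub_pow (by omega) hse hw (by omega) hW (le_max_left _ _) (le_max_right _ _) hx1)
    (hB.H_le_one_sub_pow (by omega) hse' (by omega) hh hn hH (le_max_left _ _) (le_max_right _ _)
      hx1)

/-- Lemma: easy-direction comparison of aspect ratios.
For any `Δ > δ > 1` there is `C > 0` such that for all `m, n ≥ 1`,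
`max{V_p(Δm, n), H_p(m, Δn)} ≤ 1 - (1 - max{V_p(δm, n), H_p(m, δn)})^C`,
real arguments being interpreted via ceilings. -/
theorem aspect_ratio_comparison (μ : Measure Config) (p : ℝ) (hB : IsBernoulli μ p)
    (Δ δ : ℝ) (hδ : 1 < δ) (hΔ : δ < Δ) :
    ∃ C : ℕ, 0 < C ∧ ∀ m n : ℕ, 1 ≤ m → 1 ≤ n →
      max (V μ ⌈Δ * m⌉₊ n) (H μ m ⌈Δ * n⌉₊)
        ≤ 1 - (1 - max (V μ ⌈δ * m⌉₊ n) (H μ m ⌈δ * n⌉₊)) ^ C :=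
  aspect_ratio_comparison_general μ p hB Δ δ hδ

end OrientedPerc
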